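/- arXiv:1106.4535 — 2 statements merged into one kernel-verified Lean document; each statement's English description precedes it below -/
import Mathlib

section
/- In the groupoid of germs of the action of the tiling inverse semigroup S on Ω_punc, two pairs ([t₁,P,t₂],T) and ([t₁',P',t₂'],T') are equivalent (have the same germ) if and only if T = T', t₁ = t₁', t₂ = t₂', and there exists a patch P'' containing P ∪ P' together with a tile t ∈ P'' such that T ∈ U(P'',t). -/
/- Shared framework: tilings of ℝⁿ and the tiling inverse semigroup (Kellendonk),
   following Exel–Gonçalves–Starling. -/
open Set
open scoped Classical
noncomputable section

abbrev Rn (n : ℕ) := EuclideanSpace ℝ (Fin n)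

/-- A prototile: a subset of ℝⁿ homeomorphic to the closed unit ball, carrying a label,
with the origin (the designated puncture) in its interior. -/
structure ProtoTile (n : ℕ) where
  carrier : Set (Rn n)
  label : ℕ
  ball_like : Nonempty (carrier ≃ₜ (Metric.closedBall (0 : Rn n) 1 : Set (Rn n)))
  origin_mem : (0 : Rn n) ∈ interior carrier

/-- A tile: a translate `p + x` of a prototile `p`; `puncture` is the translation vector,
i.e. the designated point `x(t)` of the tile. -/
structure Tile (n : ℕ) where
  proto : ProtoTile n
  puncture : Rn n

namespace Tile

def carrier {n : ℕ} (t : Tile n) : Set (Rn n) := (fun y => y + t.puncture) '' t.proto.carrier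

def translate {n : ℕ} (t : Tile n) (x : Rn n) : Tile n := ⟨t.proto, t.puncture + x⟩

end Tile

/-- `T + x`, the translate of a collection of tiles. -/
def translateSet {n : ℕ} (T : Set (Tile n)) (x : Rn n) : Set (Tile n) :=
  (fun t => t.translate x) '' T

/-- A partial tiling: tiles with pairwise disjoint interiors. -/
def IsPartialTiling {n : ℕ} (T : Set (Tile n)) : Prop :=
  T.Pairwise fun t t' => interior t.carrier ∩ interior t'.carrier = ∅

/-- The support of a partial tiling. -/
def tsupport' {n : ℕ} (T : Set (Tile n)) : Set (Rn n) := ⋃ t ∈ T, t.carrier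

/-- A tiling: a partial tiling whose support is all of ℝⁿ. -/
def IsTiling {n : ℕ} (T : Set (Tile n)) : Prop := IsPartialTiling T ∧ tsupport' T = univ

/-- A patch: a finite partial tiling. -/
def IsPatch {n : ℕ} (P : Set (Tile n)) : Prop := IsPartialTiling P ∧ P.Finite

/-- `T(U)`: the tiles of `T` meeting the set `U`. -/
def tilesMeeting {n : ℕ} (T : Set (Tile n)) (U : Set (Rn n)) : Set (Tile n) :=
  {t | t ∈ T ∧ (t.carrier ∩ U).Nonempty}

/-- The tiling metric. -/
def tdist {n : ℕ} (T T' : Set (Tile n)) : ℝ :=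
  sInf ({1} ∪ {ε : ℝ | 0 < ε ∧ ∃ x x' : Rn n, ‖x‖ < ε ∧ ‖x'‖ < ε ∧
    tilesMeeting (translateSet T (-x)) (Metric.ball (0 : Rn n) (1/ε)) =
      tilesMeeting (translateSet T' (-x')) (Metric.ball (0 : Rn n) (1/ε))})

/-- Finite local complexity: for each `r > 0` there are only finitely many patches
`T(B(x,r))` up to translation. -/
def FLC {n : ℕ} (T : Set (Tile n)) : Prop :=
  ∀ r : ℝ, 0 < r → ∃ F : Set (Set (Tile n)), F.Finite ∧
    ∀ x : Rn n, ∃ P ∈ F, ∃ y : Rn n, tilesMeeting T (Metric.ball x r) = translateSet P y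

/-- Repetitivity. -/
def Repetitive {n : ℕ} (T : Set (Tile n)) : Prop :=
  ∀ P ⊆ T, IsPatch P → ∃ R : ℝ, 0 < R ∧ ∀ x : Rn n, ∃ y : Rn n,
    translateSet P y ⊆ tilesMeeting T (Metric.ball x R)

def IsPeriodic {n : ℕ} (T : Set (Tile n)) : Prop :=
  ∃ x : Rn n, x ≠ 0 ∧ translateSet T x = T

/-- The continuous hull `Ω_T`, characterized as the set of all tilings every patch of
which appears as a translate of a patch of `T`. -/
def hull {n : ℕ} (T : Set (Tile n)) : Set (Set (Tile n)) :=
  {T' | IsTiling T' ∧ ∀ P ⊆ T', IsPatch P → ∃ x : Rn n, translateSet P x ⊆ T}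

/-- Strong aperiodicity: the hull contains no periodic tiling. -/
def StronglyAperiodic {n : ℕ} (T : Set (Tile n)) : Prop := ∀ T' ∈ hull T, ¬ IsPeriodic T'

/-- The punctured hull: tilings of the hull with a puncture at the origin. -/
def puncturedHull {n : ℕ} (T : Set (Tile n)) : Set (Set (Tile n)) :=
  {T' | T' ∈ hull T ∧ ∃ t ∈ T', t.puncture = 0}

/-- `U(P,t) = {T' : P - x(t) ⊆ T'}`. -/
def U {n : ℕ} (P : Set (Tile n)) (t : Tile n) : Set (Set (Tile n)) :=
  {T' | translateSet P (-t.puncture) ⊆ T'}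

/-- The (tiling-metric) topology on the punctured hull: generated by the balls of `tdist`. -/
def punctopology {n : ℕ} (T : Set (Tile n)) : TopologicalSpace ↥(puncturedHull T) :=
  TopologicalSpace.generateFrom
    {V | ∃ T₀ ∈ puncturedHull T, ∃ ε : ℝ, 0 < ε ∧
      V = {T' : ↥(puncturedHull T) | tdist (T' : Set (Tile n)) T₀ < ε}}

/-- A representative `(t₁, P, t₂)` of a doubly-pointed pattern class of the tiling `T`:
`P` is a patch occurring in `T` whose support has connected interior, `t₁, t₂ ∈ P`. -/
structure SRep (n : ℕ) (T : Set (Tile n)) where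
  t1 : Tile n
  t2 : Tile n
  P : Set (Tile n)
  mem1 : t1 ∈ P
  mem2 : t2 ∈ P
  patch : IsPatch P
  conn : IsConnected (interior (tsupport' P))
  occurs : ∃ x : Rn n, translateSet P x ⊆ T

namespace SRep

variable {n : ℕ} {T : Set (Tile n)}

/-- The involution `[t₁,P,t₂]* = [t₂,P,t₁]`. -/
def star (s : SRep n T) : SRep n T := ⟨s.t2, s.t1, s.P, s.mem2, s.mem1, s.patch, s.conn, s.occurs⟩

/-- A representative of `s* s = [t₂,P,t₂]`. -/
def srcIdem (s : SRep n T) : SRep n T :=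
  ⟨s.t2, s.t2, s.P, s.mem2, s.mem2, s.patch, s.conn, s.occurs⟩

/-- A representative of `s s* = [t₁,P,t₁]`. -/
def ranIdem (s : SRep n T) : SRep n T :=
  ⟨s.t1, s.t1, s.P, s.mem1, s.mem1, s.patch, s.conn, s.occurs⟩

/-- Two triples represent the same doubly-pointed pattern class. -/
def Equiv' (a b : SRep n T) : Prop :=
  ∃ x : Rn n, a.t1.translate x = b.t1 ∧ a.t2.translate x = b.t2 ∧ translateSet a.P x = b.P

/-- The product `[t₁,P,t₂][t₁',P',t₂']` is nonzero: there are translations making both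
patches of `T` with `t₂ + x = t₁' + x'`. -/
def Compat (a b : SRep n T) : Prop :=
  ∃ x x' : Rn n, translateSet a.P x ⊆ T ∧ translateSet b.P x' ⊆ T ∧
    a.t2.translate x = b.t1.translate x'

/-- `c` represents the (nonzero) product of the classes of `a` and `b`:
`[t₁+x, (P+x) ∪ (P'+x'), t₂'+x']`. -/
def Prod' (a b c : SRep n T) : Prop :=
  ∃ x x' : Rn n, translateSet a.P x ⊆ T ∧ translateSet b.P x' ⊆ T ∧
    a.t2.translate x = b.t1.translate x' ∧
    ∃ y : Rn n, c.t1.translate y = a.t1.translate x ∧ c.t2.translate y = b.t2.translate x' ∧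
      translateSet c.P y = translateSet a.P x ∪ translateSet b.P x'

/-- The natural order on idempotent classes, concretely: `e ≤ f` iff for suitable
representatives `t = t'` and `P' ⊆ P`. -/
def le (e f : SRep n T) : Prop :=
  ∃ x : Rn n, f.t1.translate x = e.t1 ∧ translateSet f.P x ⊆ e.P

end SRep

/-- `g` represents `s* e s`. -/
def Prod3 {n : ℕ} {T : Set (Tile n)} (s e g : SRep n T) : Prop :=
  ∃ a : SRep n T, SRep.Prod' (SRep.star s) e a ∧ SRep.Prod' a s g

/-- A filter in the idempotent semilattice `E` of the tiling inverse semigroup, encoded as a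
translation-saturated set of idempotent representatives: nonempty, upward closed and downward
directed (zero is excluded automatically since only nonzero idempotents have representatives). -/
def IsFilterE {n : ℕ} (T : Set (Tile n)) (ξ : Set (SRep n T)) : Prop :=
  ξ.Nonempty ∧ (∀ e ∈ ξ, e.t1 = e.t2) ∧
  (∀ e ∈ ξ, ∀ f : SRep n T, f.t1 = f.t2 → SRep.le e f → f ∈ ξ) ∧
  (∀ e ∈ ξ, ∀ f ∈ ξ, ∃ g ∈ ξ, SRep.le g e ∧ SRep.le g f)

/-- An ultrafilter: a maximal filter. -/
def IsUltraE {n : ℕ} (T : Set (Tile n)) (ξ : Set (SRep n T)) : Prop :=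
  IsFilterE T ξ ∧ ∀ ζ : Set (SRep n T), IsFilterE T ζ → ξ ⊆ ζ → ζ = ξ

/-- `ξ_{T₀} = {[t,P,t] : t = T₀(0), t ∈ P ⊆ T₀}`: the idempotents whose patch, positioned with
its distinguished tile having puncture at the origin, lies in `T₀`. -/
def xiOf {n : ℕ} (T : Set (Tile n)) (T₀ : Set (Tile n)) : Set (SRep n T) :=
  {e | e.t1 = e.t2 ∧ ∃ x : Rn n, (e.t1.translate x).puncture = 0 ∧
    e.t1.translate x ∈ T₀ ∧ translateSet e.P x ⊆ T₀}

/-- The partial tiling `⋃ {P : [t,P,t] ∈ ξ}` associated to a filter (each patch positioned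
with the puncture of its distinguished tile at the origin). -/
def tilingOf {n : ℕ} {T : Set (Tile n)} (ξ : Set (SRep n T)) : Set (Tile n) :=
  ⋃ e ∈ ξ, translateSet e.P (-(e.t1.puncture))

/-- A character of the idempotent semilattice `E`: nonzero, constant on classes,
multiplicative, and vanishing on zero products. -/
def IsCharE {n : ℕ} (T : Set (Tile n)) (φ : SRep n T → Bool) : Prop :=
  (∃ e, φ e = true) ∧
  (∀ e f : SRep n T, SRep.Equiv' e f → φ e = φ f) ∧
  (∀ e f g : SRep n T, e.t1 = e.t2 → f.t1 = f.t2 → SRep.Prod' e f g → φ g = (φ e && φ f)) ∧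
  (∀ e f : SRep n T, e.t1 = e.t2 → f.t1 = f.t2 → ¬ SRep.Compat e f →
    ¬(φ e = true ∧ φ f = true))

/-- The character `φ_{T₀}` of a tiling `T₀` of the punctured hull. -/
def charOf {n : ℕ} (T : Set (Tile n)) (T₀ : Set (Tile n)) : SRep n T → Bool :=
  fun e => decide (e ∈ xiOf T T₀)

/-- A point `(s, T')` of the set `Y`: `T' ∈ Ω_punc` lies in the domain `U(P,t₂)` of `θ_s`. -/
structure GermPt (n : ℕ) (T : Set (Tile n)) where
  s : SRep n T
  tl : Set (Tile n)
  mem_hull : tl ∈ puncturedHull T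
  mem_dom : tl ∈ U s.P s.t2

/-- The germ relation: `(s,T') ∼ (s'',T'')` iff `T' = T''` and there is an idempotent
`e = [t,P'',t]` with `T' ∈ U(P'',t)` and `s e = s'' e` (as classes). -/
def GermRel {n : ℕ} (T : Set (Tile n)) (p q : GermPt n T) : Prop :=
  p.tl = q.tl ∧ ∃ e : SRep n T, e.t1 = e.t2 ∧ p.tl ∈ U e.P e.t1 ∧
    ∃ g h : SRep n T, SRep.Prod' p.s e g ∧ SRep.Prod' q.s e h ∧ SRep.Equiv' g h

/-- The germ topology on the groupoid of germs: basic open sets `Θ(s,V)` for `V` an open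
subset of `U(P,t₂)`. -/
def germTop {n : ℕ} (T : Set (Tile n)) : TopologicalSpace (Quot (GermRel T)) :=
  TopologicalSpace.generateFrom
    {W | ∃ (s : SRep n T) (V : Set (Set (Tile n))),
      (letI := punctopology T;
        IsOpen {T' : ↥(puncturedHull T) | (T' : Set (Tile n)) ∈ V}) ∧
      V ⊆ U s.P s.t2 ∧
      W = {g | ∃ p : GermPt n T, p.s = s ∧ p.tl ∈ V ∧ Quot.mk (GermRel T) p = g}}

/-- `R_punc`: pairs `(T' + x, T')` of punctured-hull tilings which are translates. -/
def RpuncSet {n : ℕ} (T : Set (Tile n)) : Set (Set (Tile n) × Set (Tile n)) :=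
  {q | q.1 ∈ puncturedHull T ∧ q.2 ∈ puncturedHull T ∧ ∃ x : Rn n, q.1 = translateSet q.2 x}

/-- The topology `R_punc` inherits from `Ω_punc × ℝⁿ`. -/
def rpuncTop {n : ℕ} (T : Set (Tile n)) : TopologicalSpace ↥(RpuncSet T) :=
  letI := punctopology T
  TopologicalSpace.induced
    (fun q : ↥(RpuncSet T) =>
      ((⟨q.val.2, q.property.2.1⟩ : ↥(puncturedHull T)), Classical.choose q.property.2.2))
    inferInstance

/-! The displacement `x_s = x(t₁) - x(t₂)` of `s = [t₁,P,t₂]` is additive under products and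
invariant under equivalence, and it vanishes on idempotents; so `s e ∼ s' e` forces
`x_s = x_{s'}`, which with `x(t₂) = x(t₂') = 0` pins down `t₁` and `t₂`. Conversely, when
`t₁ = t₁'` and `t₂ = t₂'`, the idempotent `e = [t₂, P ∪ P', t₂]` gives `s e = s' e`; the interior
of the support of `P ∪ P'` is connected because the interiors of both supports contain `x(t₂)`. -/

section Topology

variable {X : Type*} [TopologicalSpace X] {A B : Set X}

theorem interior_union_subset_closure_of_isClosed (hA : IsClosed A) :
    interior (A ∪ B) ⊆ closure (interior A ∪ interior B) := by
  intro z hz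
  rw [mem_closure_iff]
  intro o ho hzo
  by_cases hW : o ∩ interior (A ∪ B) ⊆ A
  · exact ⟨z, hzo, Or.inl (interior_maximal hW (ho.inter isOpen_interior) ⟨hzo, hz⟩)⟩
  · obtain ⟨w, ⟨hwo, hw⟩, hwA⟩ := not_subset.1 hW
    exact ⟨w, hwo, Or.inr ((hA.interior_union_left hw).resolve_left hwA)⟩

theorem IsConnected.interior_union (hA : IsClosed A) (hiA : IsConnected (interior A))
    (hiB : IsConnected (interior B)) (hmeet : (interior A ∩ interior B).Nonempty) :
    IsConnected (interior (A ∪ B)) :=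
  (hiA.union hmeet hiB).subset_closure
    (union_subset (interior_mono subset_union_left) (interior_mono subset_union_right))
    (interior_union_subset_closure_of_isClosed hA)

end Topology

section Tiles

variable {n : ℕ}

theorem Tile.ext {a b : Tile n} (hproto : a.proto = b.proto) (hpunc : a.puncture = b.puncture) :
    a = b := by
  cases a; cases b; simp_all

@[simp]
theorem Tile.translate_zero (t : Tile n) : t.translate 0 = t := by
  simp [Tile.translate]

theorem Tile.translate_eq_translate_iff {a b : Tile n} {x y : Rn n} :
    a.translate x = b.translate y ↔ a.proto = b.proto ∧ a.puncture + x = b.puncture + y := by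
  simp [Tile.translate]

theorem Tile.translate_eq_iff {a b : Tile n} {x : Rn n} :
    a.translate x = b ↔ a.proto = b.proto ∧ a.puncture + x = b.puncture := by
  simpa using Tile.translate_eq_translate_iff (b := b) (x := x) (y := 0)

theorem Tile.isCompact_carrier (t : Tile n) : IsCompact t.carrier := by
  obtain ⟨e⟩ := t.proto.ball_like
  have : CompactSpace (Metric.closedBall (0 : Rn n) 1) :=
    isCompact_iff_compactSpace.mp (isCompact_closedBall _ _)
  have : CompactSpace t.proto.carrier := e.symm.compactSpace
  exact (isCompact_iff_compactSpace.mpr this).image (continuous_add_const t.puncture)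

theorem Tile.puncture_mem_interior_carrier (t : Tile n) : t.puncture ∈ interior t.carrier :=
  (isOpenMap_add_right t.puncture).image_interior_subset _
    ⟨0, t.proto.origin_mem, zero_add _⟩

@[simp]
theorem translateSet_zero (P : Set (Tile n)) : translateSet P 0 = P := by
  simp [translateSet]

theorem translateSet_mono {P Q : Set (Tile n)} (h : P ⊆ Q) (x : Rn n) :
    translateSet P x ⊆ translateSet Q x :=
  image_mono h

theorem isClosed_tsupport' {P : Set (Tile n)} (hP : P.Finite) : IsClosed (tsupport' P) :=
  hP.isClosed_biUnion fun t _ => t.isCompact_carrier.isClosed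

theorem interior_carrier_subset_interior_tsupport' {P : Set (Tile n)} {t : Tile n} (ht : t ∈ P) :
    interior t.carrier ⊆ interior (tsupport' P) :=
  interior_mono (subset_biUnion_of_mem ht)

end Tiles

namespace SRep

variable {n : ℕ} {T : Set (Tile n)}

def disp (s : SRep n T) : Rn n := s.t1.puncture - s.t2.puncture

theorem Prod'.disp_eq {a b c : SRep n T} (h : Prod' a b c) : c.disp = a.disp + b.disp := by
  obtain ⟨x, x', -, -, hab, y, hc1, hc2, -⟩ := h
  have hab := (Tile.translate_eq_translate_iff.1 hab).2
  have hc1 := (Tile.translate_eq_translate_iff.1 hc1).2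
  have hc2 := (Tile.translate_eq_translate_iff.1 hc2).2
  simp only [disp]
  linear_combination (norm := module) hc1 - hc2 + hab

theorem Prod'.t1_proto_eq {a b c : SRep n T} (h : Prod' a b c) : c.t1.proto = a.t1.proto := by
  obtain ⟨_, _, -, -, -, _, hc1, -⟩ := h
  exact (Tile.translate_eq_translate_iff.1 hc1).1

theorem Prod'.t2_proto_eq {a b c : SRep n T} (h : Prod' a b c) : a.t2.proto = b.t1.proto := by
  obtain ⟨_, _, -, -, hab, -⟩ := h
  exact (Tile.translate_eq_translate_iff.1 hab).1

theorem Equiv'.disp_eq {a b : SRep n T} (h : Equiv' a b) : a.disp = b.disp := by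
  obtain ⟨x, h1, h2, -⟩ := h
  have h1 := (Tile.translate_eq_iff.1 h1).2
  have h2 := (Tile.translate_eq_iff.1 h2).2
  simp only [disp]
  linear_combination (norm := module) h1 - h2

theorem Equiv'.t1_proto_eq {a b : SRep n T} (h : Equiv' a b) : a.t1.proto = b.t1.proto := by
  obtain ⟨_, h1, -⟩ := h
  exact (Tile.translate_eq_iff.1 h1).1

theorem Equiv'.refl (a : SRep n T) : Equiv' a a :=
  ⟨0, Tile.translate_zero _, Tile.translate_zero _, translateSet_zero _⟩

theorem disp_eq_zero {e : SRep n T} (he : e.t1 = e.t2) : e.disp = 0 := by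
  simp [disp, he]

theorem isConnected_interior_tsupport'_union (a b : SRep n T) (h : a.t2 = b.t2) :
    IsConnected (interior (tsupport' (a.P ∪ b.P))) := by
  rw [tsupport', biUnion_union]
  refine IsConnected.interior_union (isClosed_tsupport' a.patch.2) a.conn b.conn
    ⟨a.t2.puncture, ?_, ?_⟩
  · exact interior_carrier_subset_interior_tsupport' a.mem2 a.t2.puncture_mem_interior_carrier
  · exact interior_carrier_subset_interior_tsupport' (h ▸ b.mem2)
      a.t2.puncture_mem_interior_carrier

theorem prod'_of_subset {s e c : SRep n T} (he1 : e.t1 = s.t2) (hc1 : c.t1 = s.t1)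
    (hc2 : c.t2 = e.t2) (hP : s.P ⊆ e.P) (hc : c.P = e.P) : Prod' s e c := by
  obtain ⟨x, hx⟩ := e.occurs
  refine ⟨x, x, (translateSet_mono hP x).trans hx, hx, by rw [he1], x, by rw [hc1],
    by rw [hc2], ?_⟩
  rw [hc, union_eq_right.2 (translateSet_mono hP x)]

end SRep

theorem mem_U_iff_of_puncture_eq_zero {n : ℕ} {P T' : Set (Tile n)} {t : Tile n}
    (ht : t.puncture = 0) : T' ∈ U P t ↔ P ⊆ T' := by
  simp [U, ht]

namespace GermPt

variable {n : ℕ} {T : Set (Tile n)}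

theorem patch_subset (p : GermPt n T) (hp : p.s.t2.puncture = 0) : p.s.P ⊆ p.tl :=
  (mem_U_iff_of_puncture_eq_zero hp).1 p.mem_dom

theorem union_patch_subset {p q : GermPt n T} (htl : p.tl = q.tl) (hp : p.s.t2.puncture = 0)
    (hq : q.s.t2.puncture = 0) : p.s.P ∪ q.s.P ⊆ p.tl :=
  union_subset (p.patch_subset hp) (htl ▸ q.patch_subset hq)

theorem isPatch_union {p q : GermPt n T} (htl : p.tl = q.tl) (hp : p.s.t2.puncture = 0)
    (hq : q.s.t2.puncture = 0) : IsPatch (p.s.P ∪ q.s.P) :=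
  ⟨p.mem_hull.1.1.1.mono (union_patch_subset htl hp hq), p.s.patch.2.union q.s.patch.2⟩

end GermPt

section GermRel

variable {n : ℕ} {T : Set (Tile n)} {p q : GermPt n T}

theorem GermRel.disp_eq (h : GermRel T p q) : p.s.disp = q.s.disp := by
  obtain ⟨-, e, he, -, g, g', hg, hg', hgg'⟩ := h
  have he0 := SRep.disp_eq_zero he
  calc p.s.disp = p.s.disp + e.disp := by rw [he0, add_zero]
    _ = g.disp := hg.disp_eq.symm
    _ = g'.disp := hgg'.disp_eq
    _ = q.s.disp + e.disp := hg'.disp_eq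
    _ = q.s.disp := by rw [he0, add_zero]

theorem GermRel.t1_proto_eq (h : GermRel T p q) : p.s.t1.proto = q.s.t1.proto := by
  obtain ⟨-, _, -, -, g, g', hg, hg', hgg'⟩ := h
  rw [← hg.t1_proto_eq, hgg'.t1_proto_eq, hg'.t1_proto_eq]

theorem GermRel.t2_proto_eq (h : GermRel T p q) : p.s.t2.proto = q.s.t2.proto := by
  obtain ⟨-, _, -, -, _, _, hg, hg', -⟩ := h
  rw [hg.t2_proto_eq, hg'.t2_proto_eq]

theorem germRel_of_t1_eq_of_t2_eq (htl : p.tl = q.tl) (ht1 : p.s.t1 = q.s.t1)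
    (ht2 : p.s.t2 = q.s.t2) (hp : p.s.t2.puncture = 0) (hq : q.s.t2.puncture = 0) :
    GermRel T p q := by
  have hsub := GermPt.union_patch_subset htl hp hq
  have hQ := GermPt.isPatch_union htl hp hq
  have hconn := p.s.isConnected_interior_tsupport'_union q.s ht2
  have hocc := p.mem_hull.1.2 _ hsub hQ
  let e : SRep n T := ⟨p.s.t2, p.s.t2, _, .inl p.s.mem2, .inl p.s.mem2, hQ, hconn, hocc⟩
  let g : SRep n T := ⟨p.s.t1, p.s.t2, _, .inl p.s.mem1, .inl p.s.mem2, hQ, hconn, hocc⟩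
  refine ⟨htl, e, rfl, (mem_U_iff_of_puncture_eq_zero hp).2 hsub, g, g, ?_, ?_, .refl g⟩
  · exact SRep.prod'_of_subset rfl rfl rfl subset_union_left rfl
  · exact SRep.prod'_of_subset (e := e) (c := g) (by simp [e, ht2]) ht1 rfl subset_union_right rfl

end GermRel

theorem germRel_characterization_general {n : ℕ} (T : Set (Tile n))
    (p q : GermPt n T) (hp : p.s.t2.puncture = 0) (hq : q.s.t2.puncture = 0) :
    GermRel T p q ↔
      (p.tl = q.tl ∧ p.s.t1 = q.s.t1 ∧ p.s.t2 = q.s.t2 ∧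
        ∃ (P'' : Set (Tile n)) (t : Tile n), IsPatch P'' ∧
          (∃ x : Rn n, translateSet P'' x ⊆ T) ∧ t ∈ P'' ∧
          p.s.P ∪ q.s.P ⊆ P'' ∧ p.tl ∈ U P'' t) := by
  constructor
  · intro h
    have htl : p.tl = q.tl := h.1
    have ht2 : p.s.t2 = q.s.t2 := Tile.ext h.t2_proto_eq (hp.trans hq.symm)
    have ht1 : p.s.t1 = q.s.t1 := by
      refine Tile.ext h.t1_proto_eq ?_
      simpa [SRep.disp, hp, hq] using h.disp_eq
    have hsub := GermPt.union_patch_subset htl hp hq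
    have hQ := GermPt.isPatch_union htl hp hq
    exact ⟨htl, ht1, ht2, _, p.s.t2, hQ, p.mem_hull.1.2 _ hsub hQ, .inl p.s.mem2, subset_rfl,
      (mem_U_iff_of_puncture_eq_zero hp).2 hsub⟩
  · rintro ⟨htl, ht1, ht2, -⟩
    exact germRel_of_t1_eq_of_t2_eq htl ht1 ht2 hp hq

/-- Characterization of the germ relation for the action of the tiling inverse semigroup on
the punctured hull (representatives positioned with the puncture of `t₂` at the origin):
`([t₁,P,t₂],T') ∼ ([t₁',P',t₂'],T'')` iff `T' = T''`, `t₁ = t₁'`, `t₂ = t₂'`, and there is a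
patch `P'' ⊇ P ∪ P'` occurring in `T` and a tile `t ∈ P''` with `T' ∈ U(P'',t)`. -/
theorem germRel_characterization {n : ℕ} (T : Set (Tile n)) (hT : IsTiling T)
    (hFLC : FLC T) (hrep : Repetitive T) (hap : StronglyAperiodic T)
    (p q : GermPt n T) (hp : p.s.t2.puncture = 0) (hq : q.s.t2.puncture = 0) :
    GermRel T p q ↔
      (p.tl = q.tl ∧ p.s.t1 = q.s.t1 ∧ p.s.t2 = q.s.t2 ∧
        ∃ (P'' : Set (Tile n)) (t : Tile n), IsPatch P'' ∧
          (∃ x : Rn n, translateSet P'' x ⊆ T) ∧ t ∈ P'' ∧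
          p.s.P ∪ q.s.P ⊆ P'' ∧ p.tl ∈ U P'' t) :=
  germRel_characterization_general T p q hp hq
end
end

section
/- If two pairs (s,T) and (s',T) in Y (with s = [t₁,P,t₂], s' = [t₁',P',t₂']) are germ-equivalent under the action of the tiling inverse semigroup on Ω_punc, then the translation vectors coincide: x_s = x_{s'}, i.e., x(t₁) − x(t₂) = x(t₁') − x(t₂'). -/
/- Shared framework: tilings of ℝⁿ and the tiling inverse semigroup (Kellendonk),
   following Exel–Gonçalves–Starling. -/
open Set
open scoped Classical
noncomputable section

/-! The vector `x_s` is additive along nonzero products, invariant under translating a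
representative, and zero on idempotents. Hence `x_s = x_{se} = x_{s'e} = x_{s'}`. -/

namespace Tile

@[simp]
theorem puncture_translate {n : ℕ} (t : Tile n) (x : Rn n) :
    (t.translate x).puncture = t.puncture + x :=
  rfl

theorem puncture_translate_sub_puncture_translate {n : ℕ} (t t' : Tile n) (x : Rn n) :
    (t.translate x).puncture - (t'.translate x).puncture = t.puncture - t'.puncture :=
  add_sub_add_right_eq_sub _ _ _

end Tile

namespace SRep

variable {n : ℕ} {T : Set (Tile n)}

def vec (s : SRep n T) : Rn n := s.t1.puncture - s.t2.puncture

theorem vec_eq_zero_of_t1_eq_t2 {e : SRep n T} (he : e.t1 = e.t2) : e.vec = 0 := by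
  rw [vec, he, sub_self]

theorem Equiv'.vec_eq {a b : SRep n T} (hab : Equiv' a b) : a.vec = b.vec := by
  obtain ⟨x, h1, h2, -⟩ := hab
  rw [vec, vec, ← h1, ← h2, Tile.puncture_translate_sub_puncture_translate]

theorem Prod'.vec_eq {a b c : SRep n T} (habc : Prod' a b c) : c.vec = a.vec + b.vec := by
  obtain ⟨x, x', -, -, hmatch, y, h1, h2, -⟩ := habc
  have hmatch' := congrArg Tile.puncture hmatch
  simp only [Tile.puncture_translate] at hmatch'
  calc c.vec = (c.t1.translate y).puncture - (c.t2.translate y).puncture :=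
        (Tile.puncture_translate_sub_puncture_translate _ _ _).symm
    _ = (a.t1.puncture + x) - (b.t2.puncture + x') := by rw [h1, h2]; rfl
    _ = (a.t1.puncture - a.t2.puncture) + ((a.t2.puncture + x) - (b.t2.puncture + x')) := by abel
    _ = (a.t1.puncture - a.t2.puncture) + (b.t1.puncture - b.t2.puncture) := by
      rw [hmatch', add_sub_add_right_eq_sub]

end SRep

theorem germ_equivalent_same_vector_general {n : ℕ} (T : Set (Tile n))
    (p q : GermPt n T) (h : GermRel T p q) :
    p.s.t1.puncture - p.s.t2.puncture = q.s.t1.puncture - q.s.t2.puncture := by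
  obtain ⟨-, e, he, -, g, g', hg, hg', hgg'⟩ := h
  have he0 := SRep.vec_eq_zero_of_t1_eq_t2 he
  calc p.s.vec = g.vec := by rw [hg.vec_eq, he0, add_zero]
    _ = g'.vec := hgg'.vec_eq
    _ = q.s.vec := by rw [hg'.vec_eq, he0, add_zero]

/-- If two pairs `(s,T')` and `(s',T')` are germ-equivalent under the action of the tiling
inverse semigroup on the punctured hull, then the translation vectors coincide:
`x_s = x(t₁) - x(t₂) = x(t₁') - x(t₂') = x_{s'}`. -/
theorem germ_equivalent_same_vector {n : ℕ} (T : Set (Tile n)) (hT : IsTiling T)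
    (hFLC : FLC T) (hrep : Repetitive T) (hap : StronglyAperiodic T)
    (p q : GermPt n T) (h : GermRel T p q) :
    p.s.t1.puncture - p.s.t2.puncture = q.s.t1.puncture - q.s.t2.puncture :=
  germ_equivalent_same_vector_general T p q h
end
end
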